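/- Let f be a complex-valued arithmetic function and let η ∈ (0,2) be fixed. Assume there is a constant C > 0 such that ∑_{n ≤ x} |f(n)|² ≤ C x^η for all real x ≥ 1. Then the series C_f = ∑_{n=1}^∞ f(n)/(n(n+1)) converges and S_f(x) = C_f · x + O(x^{(1+η)/3}) as x → ∞. -/

import Mathlib

open Finset Filter Asymptotics

/-!
Write `x = y³`, `N = ⌊x⌋₊` and `M = ⌊y²⌋₊ ≈ x^{2/3}`. Since `⌊x / n⌋₊ = N / n`, the terms of
`S_f(x)` with `N / n > M` are those with `n ≤ N / (M + 1) ≤ y`, and the remaining ones group into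
`∑_{m ≤ M} (N / m - N / (m + 1)) f(m)`, where each count differs from `x / (m (m + 1))` by less
than `1`. Hence `S_f(x) - C_f x` is the sum of three errors:
* `∑_{n ≤ y} f(N / n)`, bounded through `|f(m)| ≤ √C m^{η/2}` by `√C x^{η/2} y^{1-η/2}`;
* `∑_{m ≤ M} O(1) f(m)`, bounded by Cauchy–Schwarz by `√(C M^{1+η})`;
* `x ∑_{m > M} f(m) / (m (m + 1))`, bounded through `|f(m)| ≤ √C m^{η/2}` by `x M^{η/2-1}`.
Each is `O(y^{1+η}) = O(x^{(1+η)/3})`.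
-/

theorem Nat.div_eq_of_mem_Ioc_div {N k n : ℕ} (hn : n ∈ Ioc (N / (k + 1)) (N / k)) :
    N / n = k := by
  obtain ⟨hlo, hhi⟩ := mem_Ioc.mp hn
  have hn₀ : 0 < n := Nat.zero_lt_of_lt hlo
  have hk₀ : 0 < k := Nat.pos_of_ne_zero fun hk => by simp [hk] at hhi; omega
  apply le_antisymm
  · rw [← Nat.lt_succ_iff, Nat.div_lt_iff_lt_mul hn₀]
    rwa [Nat.div_lt_iff_lt_mul k.succ_pos, mul_comm] at hlo
  · rw [Nat.le_div_iff_mul_le hn₀, mul_comm]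
    rwa [Nat.le_div_iff_mul_le hk₀] at hhi

theorem sum_Ioc_div_eq_sum_Icc_smul {M : Type*} [AddCommMonoid M] (h : ℕ → M) (N K : ℕ) :
    ∑ n ∈ Ioc (N / (K + 1)) N, h (N / n) = ∑ m ∈ Icc 1 K, (N / m - N / (m + 1)) • h m := by
  induction K with
  | zero => simp
  | succ K ih =>
    have hfiber : ∑ n ∈ Ioc (N / (K + 2)) (N / (K + 1)), h (N / n) =
        (N / (K + 1) - N / (K + 2)) • h (K + 1) := by
      rw [sum_congr rfl fun n hn => by rw [Nat.div_eq_of_mem_Ioc_div hn], sum_const, Nat.card_Ioc]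
    rw [sum_Icc_succ_top (by omega), ← ih, ← hfiber]
    exact (sum_Ioc_consecutive _ (Nat.div_le_div_left (Nat.le_succ (K + 1)) K.succ_pos)
      (Nat.div_le_self N (K + 1))).symm.trans (add_comm _ _)

theorem sum_Icc_div_eq_add {R : Type*} [NonAssocSemiring R] (h : ℕ → R) (N K : ℕ) :
    ∑ n ∈ Icc 1 N, h (N / n) = ∑ n ∈ Icc 1 (N / (K + 1)), h (N / n) +
      ∑ m ∈ Icc 1 K, ((N / m - N / (m + 1) : ℕ) : R) * h m := by
  simp only [← nsmul_eq_mul, ← sum_Ioc_div_eq_sum_Icc_smul]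
  rw [show (1 : ℕ) = 0 + 1 from rfl, Icc_add_one_left_eq_Ioc, Icc_add_one_left_eq_Ioc,
    sum_Ioc_consecutive _ (Nat.zero_le _) (Nat.div_le_self _ _)]

theorem abs_natFloor_sub_natFloor_sub_lt_one {a b : ℝ} (ha : 0 ≤ a) (hb : 0 ≤ b) :
    |((⌊a⌋₊ : ℝ) - ⌊b⌋₊) - (a - b)| < 1 := by
  have := Nat.floor_le ha; have := Nat.lt_floor_add_one a
  have := Nat.floor_le hb; have := Nat.lt_floor_add_one b
  rw [abs_lt]; constructor <;> linarith

theorem norm_sum_mul_le_sqrt_card_mul_sum_sq {ι R : Type*} [SeminormedRing R] (s : Finset ι)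
    (c f : ι → R) (hc : ∀ i ∈ s, ‖c i‖ ≤ 1) :
    ‖∑ i ∈ s, c i * f i‖ ≤ √(#s * ∑ i ∈ s, ‖f i‖ ^ 2) := by
  calc ‖∑ i ∈ s, c i * f i‖ ≤ ∑ i ∈ s, ‖f i‖ := by
        refine (norm_sum_le _ _).trans (sum_le_sum fun i hi => ?_)
        exact (norm_mul_le _ _).trans (mul_le_of_le_one_left (norm_nonneg _) (hc i hi))
    _ ≤ √(#s * ∑ i ∈ s, ‖f i‖ ^ 2) := Real.le_sqrt_of_sq_le sq_sum_le_card_mul_sum_sq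

theorem mul_rpow_sub_one_le_rpow_sub_rpow {q t : ℝ} (hq₀ : 0 ≤ q) (hq₁ : q ≤ 1) (ht : 1 ≤ t) :
    q * t ^ (q - 1) ≤ t ^ q - (t - 1) ^ q := by
  have ht₀ : 0 < t := by linarith
  have hinv : -1 ≤ -t⁻¹ := by linarith [inv_le_one_of_one_le₀ ht]
  have hbern : (1 + -t⁻¹) ^ q ≤ 1 + q * -t⁻¹ := rpow_one_add_le_one_add_mul_self hinv hq₀ hq₁
  have hsplit : t - 1 = t * (1 + -t⁻¹) := by field_simp; ring
  rw [hsplit, Real.mul_rpow ht₀.le (by linarith), Real.rpow_sub_one ht₀.ne']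
  have := mul_le_mul_of_nonneg_left hbern (Real.rpow_nonneg ht₀.le q)
  calc q * (t ^ q / t) = t ^ q - t ^ q * (1 + q * -t⁻¹) := by field_simp; ring
    _ ≤ _ := by linarith

theorem sum_Icc_rpow_neg_le {p : ℝ} (hp₀ : 0 ≤ p) (hp₁ : p < 1) (K : ℕ) :
    ∑ n ∈ Icc 1 K, (n : ℝ) ^ (-p) ≤ (K : ℝ) ^ (1 - p) / (1 - p) := by
  have h1p : 0 < 1 - p := by linarith
  induction K with
  | zero => simp [Real.zero_rpow h1p.ne']
  | succ K ih =>
    rw [sum_Icc_succ_top (by omega), le_div_iff₀ h1p, add_mul]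
    have hstep := mul_rpow_sub_one_le_rpow_sub_rpow h1p.le (by linarith)
      (by exact_mod_cast K.succ_pos : (1 : ℝ) ≤ (K + 1 : ℕ))
    rw [le_div_iff₀ h1p] at ih
    push_cast at hstep ⊢
    rw [add_sub_cancel_right, show 1 - p - 1 = -p by ring] at hstep
    linarith

theorem summable_nat_add_rpow {q : ℝ} (hq : q < -1) (M : ℕ) :
    Summable fun n : ℕ => ((n + M + 1 : ℕ) : ℝ) ^ q := by
  simpa only [← add_assoc] using
    (summable_nat_add_iff (M + 1)).mpr (Real.summable_nat_rpow.mpr hq)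

theorem tsum_nat_add_rpow_le {q : ℝ} (hq : q < -1) {M : ℕ} (hM : 0 < M) :
    ∑' n : ℕ, ((n + M + 1 : ℕ) : ℝ) ^ q ≤ -(M : ℝ) ^ (q + 1) / (q + 1) := by
  have hM' : (0 : ℝ) < M := by exact_mod_cast hM
  rw [← integral_Ioi_rpow_of_lt hq hM']
  refine AntitoneOn.tsum_comp_add_le_integral M ?_ (integrableOn_Ioi_rpow_of_lt hq hM')
    fun t ht => Real.rpow_nonneg (hM'.trans ht).le q
  exact fun a ha b _ hab => Real.rpow_le_rpow_of_nonpos (hM'.trans_le ha) hab (by linarith)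

/-- `C_f = ∑' n, cfTerm f n`. -/
noncomputable def cfTerm (f : ℕ → ℂ) (n : ℕ) : ℂ := f (n + 1) / (((n : ℂ) + 1) * ((n : ℂ) + 2))

section

variable {f : ℕ → ℂ}

theorem sum_range_cfTerm (f : ℕ → ℂ) (M : ℕ) :
    ∑ n ∈ range M, cfTerm f n = ∑ m ∈ Icc 1 M, f m / (m * (m + 1)) := by
  induction M with
  | zero => simp
  | succ M ih =>
    rw [sum_range_succ, ih, sum_Icc_succ_top (by omega), cfTerm]
    push_cast
    ring

theorem norm_cfTerm_le {A p : ℝ} (hf : ∀ m, 1 ≤ m → ‖f m‖ ≤ A * (m : ℝ) ^ p) (n : ℕ) :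
    ‖cfTerm f n‖ ≤ A * ((n + 1 : ℕ) : ℝ) ^ (p - 2) := by
  have hk : (0 : ℝ) < (n + 1 : ℕ) := by positivity
  have hnorm : ‖cfTerm f n‖ = ‖f (n + 1)‖ / ((n + 1 : ℕ) * ((n + 1 : ℕ) + 1) : ℝ) := by
    rw [cfTerm, norm_div, norm_mul, show (n : ℂ) + 1 = ((n + 1 : ℕ) : ℂ) by push_cast; ring,
      show (n : ℂ) + 2 = ((n + 2 : ℕ) : ℂ) by push_cast; ring, Complex.norm_natCast,
      Complex.norm_natCast]
    push_cast
    ring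
  have hf' := hf (n + 1) (by omega)
  rw [hnorm, show p - 2 = p - 1 - 1 by ring, Real.rpow_sub_one hk.ne', Real.rpow_sub_one hk.ne',
    div_div, ← mul_div_assoc]
  exact div_le_div₀ ((norm_nonneg _).trans hf') hf' (by positivity) (by gcongr; linarith)

theorem nonneg_of_norm_le_mul_rpow {A p : ℝ} (hf : ∀ m, 1 ≤ m → ‖f m‖ ≤ A * (m : ℝ) ^ p) :
    0 ≤ A := by
  simpa using (norm_nonneg _).trans (hf 1 le_rfl)

theorem summable_cfTerm {A p : ℝ} (hp₁ : p < 1) (hf : ∀ m, 1 ≤ m → ‖f m‖ ≤ A * (m : ℝ) ^ p) :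
    Summable (cfTerm f) :=
  Summable.of_norm_bounded ((summable_nat_add_rpow (by linarith) 0).mul_left A)
    (norm_cfTerm_le hf)

theorem norm_le_sqrt_mul_rpow_of_sum_sq_le {C η : ℝ}
    (hf : ∀ x : ℝ, 1 ≤ x → ∑ n ∈ Icc 1 ⌊x⌋₊, ‖f n‖ ^ 2 ≤ C * x ^ η) {m : ℕ} (hm : 1 ≤ m) :
    ‖f m‖ ≤ √C * (m : ℝ) ^ (η / 2) := by
  have hsq : ‖f m‖ ^ 2 ≤ C * (m : ℝ) ^ η := by
    have := hf m (by exact_mod_cast hm)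
    rw [Nat.floor_natCast] at this
    exact (single_le_sum (f := fun n => ‖f n‖ ^ 2) (fun _ _ => sq_nonneg _)
      (mem_Icc.mpr ⟨hm, le_rfl⟩)).trans this
  calc ‖f m‖ ≤ √(C * (m : ℝ) ^ η) := Real.le_sqrt_of_sq_le hsq
    _ = √C * (m : ℝ) ^ (η / 2) := by
      rw [Real.sqrt_mul' _ (by positivity), Real.sqrt_eq_rpow (_ ^ η),
        ← Real.rpow_mul (by positivity), mul_one_div]

theorem norm_tsum_cfTerm_nat_add_le {A p : ℝ} (hp₁ : p < 1)
    (hf : ∀ m, 1 ≤ m → ‖f m‖ ≤ A * (m : ℝ) ^ p) {M : ℕ} (hM : 0 < M) :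
    ‖∑' n, cfTerm f (n + M)‖ ≤ A * ((M : ℝ) ^ (p - 1) / (1 - p)) := by
  have hA : 0 ≤ A := nonneg_of_norm_le_mul_rpow hf
  calc ‖∑' n, cfTerm f (n + M)‖ ≤ ∑' n : ℕ, A * ((n + M + 1 : ℕ) : ℝ) ^ (p - 2) :=
        tsum_of_norm_bounded ((summable_nat_add_rpow (by linarith) M).mul_left A).hasSum
          fun n => norm_cfTerm_le hf (n + M)
    _ ≤ A * ((M : ℝ) ^ (p - 1) / (1 - p)) := by
      rw [tsum_mul_left]
      refine mul_le_mul_of_nonneg_left ?_ hA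
      calc _ ≤ -(M : ℝ) ^ (p - 2 + 1) / (p - 2 + 1) := tsum_nat_add_rpow_le (by linarith) hM
        _ = (M : ℝ) ^ (p - 1) / (1 - p) := by
          rw [show p - 2 + 1 = p - 1 by ring, neg_div, ← div_neg, neg_sub]

theorem norm_sum_Icc_div_le {A p : ℝ} (hp₀ : 0 ≤ p) (hp₁ : p < 1)
    (hf : ∀ m, 1 ≤ m → ‖f m‖ ≤ A * (m : ℝ) ^ p) {N K : ℕ} (hK : K ≤ N) :
    ‖∑ n ∈ Icc 1 K, f (N / n)‖ ≤ A * (N : ℝ) ^ p * ((K : ℝ) ^ (1 - p) / (1 - p)) := by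
  have hA : 0 ≤ A := nonneg_of_norm_le_mul_rpow hf
  have hterm : ∀ n ∈ Icc 1 K, ‖f (N / n)‖ ≤ A * (N : ℝ) ^ p * (n : ℝ) ^ (-p) := by
    intro n hn
    obtain ⟨hn₁, hnK⟩ := mem_Icc.mp hn
    have hn₀ : (0 : ℝ) < n := by exact_mod_cast hn₁
    calc ‖f (N / n)‖ ≤ A * ((N / n : ℕ) : ℝ) ^ p :=
          hf _ ((Nat.one_le_div_iff (by omega)).mpr (hnK.trans hK))
      _ ≤ A * ((N : ℝ) / n) ^ p := by gcongr; exact Nat.cast_div_le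
      _ = A * (N : ℝ) ^ p * (n : ℝ) ^ (-p) := by
        rw [Real.div_rpow (by positivity) hn₀.le, Real.rpow_neg hn₀.le, mul_assoc, div_eq_mul_inv]
  calc ‖∑ n ∈ Icc 1 K, f (N / n)‖ ≤ ∑ n ∈ Icc 1 K, A * (N : ℝ) ^ p * (n : ℝ) ^ (-p) :=
        (norm_sum_le _ _).trans (sum_le_sum hterm)
    _ ≤ _ := by
      rw [← mul_sum]
      exact mul_le_mul_of_nonneg_left (sum_Icc_rpow_neg_le hp₀ hp₁ K) (by positivity)

theorem sum_floor_div_sub_eq (hs : Summable (cfTerm f)) (x : ℝ) (M : ℕ) :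
    ∑ n ∈ Icc 1 ⌊x⌋₊, f ⌊x / n⌋₊ - (∑' n, cfTerm f n) * x =
      ∑ n ∈ Icc 1 (⌊x⌋₊ / (M + 1)), f (⌊x⌋₊ / n) +
      ∑ m ∈ Icc 1 M, (((⌊x⌋₊ / m - ⌊x⌋₊ / (m + 1) : ℕ) : ℂ) - x / (m * (m + 1))) * f m -
      (∑' n, cfTerm f (n + M)) * x := by
  simp_rw [Nat.floor_div_natCast]
  have hpartial : (∑ m ∈ Icc 1 M, f m / (m * (m + 1))) * x =
      ∑ m ∈ Icc 1 M, x / (m * (m + 1)) * f m := by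
    rw [sum_mul]; exact sum_congr rfl fun m _ => by ring
  rw [sum_Icc_div_eq_add _ _ M, ← hs.sum_add_tsum_nat_add M, sum_range_cfTerm, add_mul, hpartial]
  simp only [sub_mul, sum_sub_distrib]
  ring

theorem norm_natFloor_div_sub_le_one {x : ℝ} (hx : 0 ≤ x) {m : ℕ} (hm : 1 ≤ m) :
    ‖((⌊x⌋₊ / m - ⌊x⌋₊ / (m + 1) : ℕ) : ℂ) - x / (m * (m + 1))‖ ≤ 1 := by
  have hm₀ : (m : ℂ) ≠ 0 := by exact_mod_cast (by omega : m ≠ 0)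
  have hm₁ : (m : ℂ) + 1 ≠ 0 := by exact_mod_cast m.succ_ne_zero
  have heq : ((⌊x⌋₊ / m - ⌊x⌋₊ / (m + 1) : ℕ) : ℂ) - x / (m * (m + 1)) =
      (((⌊x / m⌋₊ : ℝ) - ⌊x / (m + 1 : ℕ)⌋₊) - (x / m - x / (m + 1 : ℕ)) : ℝ) := by
    have hsplit : (x : ℂ) / (m * (m + 1)) = x / m - x / (m + 1) := by field_simp; ring
    rw [hsplit, Nat.cast_sub (Nat.div_le_div_left m.le_succ hm), Nat.floor_div_natCast,
      Nat.floor_div_natCast]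
    push_cast
    ring
  rw [heq, Complex.norm_real, Real.norm_eq_abs]
  exact (abs_natFloor_sub_natFloor_sub_lt_one (by positivity) (by positivity)).le

variable {y : ℝ}

theorem norm_sum_Icc_floor_cube_div_le {A p : ℝ} (hp₀ : 0 ≤ p) (hp₁ : p < 1)
    (hf : ∀ m, 1 ≤ m → ‖f m‖ ≤ A * (m : ℝ) ^ p) (hy : 1 ≤ y) :
    ‖∑ n ∈ Icc 1 (⌊y ^ 3⌋₊ / (⌊y ^ 2⌋₊ + 1)), f (⌊y ^ 3⌋₊ / n)‖ ≤
      A / (1 - p) * y ^ (1 + 2 * p) := by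
  have hy₀ : 0 < y := by linarith
  have hA : 0 ≤ A := nonneg_of_norm_le_mul_rpow hf
  have hN : (⌊y ^ 3⌋₊ : ℝ) ≤ y ^ 3 := Nat.floor_le (by positivity)
  have hK : ((⌊y ^ 3⌋₊ / (⌊y ^ 2⌋₊ + 1) : ℕ) : ℝ) ≤ y := by
    refine Nat.cast_div_le.trans ((div_le_iff₀ (by positivity)).mpr ?_)
    have := Nat.lt_floor_add_one (y ^ 2)
    push_cast
    nlinarith
  calc _ ≤ A * (⌊y ^ 3⌋₊ : ℝ) ^ p *
        (((⌊y ^ 3⌋₊ / (⌊y ^ 2⌋₊ + 1) : ℕ) : ℝ) ^ (1 - p) / (1 - p)) :=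
        norm_sum_Icc_div_le hp₀ hp₁ hf (Nat.div_le_self _ _)
    _ ≤ A * (y ^ 3) ^ p * (y ^ (1 - p) / (1 - p)) := by
      gcongr
    _ = A / (1 - p) * y ^ (1 + 2 * p) := by
      rw [← Real.rpow_natCast_mul hy₀.le, mul_assoc, ← mul_div_assoc, ← Real.rpow_add hy₀]
      ring_nf

theorem norm_sum_Icc_floor_sq_mul_le {C η : ℝ} (hη₀ : 0 ≤ η)
    (hf : ∀ x : ℝ, 1 ≤ x → ∑ n ∈ Icc 1 ⌊x⌋₊, ‖f n‖ ^ 2 ≤ C * x ^ η) (hy : 1 ≤ y)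
    (c : ℕ → ℂ) (hc : ∀ m, 1 ≤ m → ‖c m‖ ≤ 1) :
    ‖∑ m ∈ Icc 1 ⌊y ^ 2⌋₊, c m * f m‖ ≤ √C * y ^ (1 + η) := by
  set M := ⌊y ^ 2⌋₊
  have hy₀ : 0 < y := by linarith
  have hM : 1 ≤ M := Nat.one_le_floor_iff _ |>.mpr (one_le_pow₀ hy)
  have hMy : (M : ℝ) ≤ y ^ 2 := Nat.floor_le (by positivity)
  calc _ ≤ √(#(Icc 1 M) * ∑ m ∈ Icc 1 M, ‖f m‖ ^ 2) :=
        norm_sum_mul_le_sqrt_card_mul_sum_sq _ _ _ fun m hm => hc m (mem_Icc.mp hm).1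
    _ ≤ √(C * (M : ℝ) ^ (1 + η)) := by
      refine Real.sqrt_le_sqrt ?_
      have := hf M (by exact_mod_cast hM)
      rw [Nat.floor_natCast] at this
      rw [Nat.card_Icc, Nat.add_sub_cancel, Real.rpow_add (by positivity), Real.rpow_one]
      nlinarith
    _ ≤ √C * y ^ (1 + η) := by
      rw [Real.sqrt_mul' _ (by positivity)]
      refine mul_le_mul_of_nonneg_left ?_ (Real.sqrt_nonneg C)
      calc √((M : ℝ) ^ (1 + η)) ≤ √((y ^ (1 + η)) ^ 2) := by
            rw [← Real.rpow_mul_natCast hy₀.le, mul_comm, Real.rpow_natCast_mul hy₀.le]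
            gcongr
        _ = y ^ (1 + η) := Real.sqrt_sq (by positivity)

theorem norm_tsum_cfTerm_floor_sq_mul_le {A p : ℝ} (hp₀ : 0 ≤ p) (hp₁ : p < 1)
    (hf : ∀ m, 1 ≤ m → ‖f m‖ ≤ A * (m : ℝ) ^ p) (hy : 1 ≤ y) :
    ‖(∑' n, cfTerm f (n + ⌊y ^ 2⌋₊)) * ((y ^ 3 : ℝ) : ℂ)‖ ≤
      2 * A / (1 - p) * y ^ (1 + 2 * p) := by
  set M := ⌊y ^ 2⌋₊
  have hy₀ : 0 < y := by linarith
  have hA : 0 ≤ A := nonneg_of_norm_le_mul_rpow hf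
  have hM : 1 ≤ M := Nat.one_le_floor_iff _ |>.mpr (one_le_pow₀ hy)
  have hM₀ : (0 : ℝ) < M := by exact_mod_cast hM
  have hMy : (M : ℝ) ≤ y ^ 2 := Nat.floor_le (by positivity)
  have hyM : y ^ 2 ≤ 2 * M := by
    have := Nat.lt_floor_add_one (y ^ 2)
    have : (1 : ℝ) ≤ M := by exact_mod_cast hM
    linarith
  have hMp : (M : ℝ) ^ (p - 1) ≤ 2 * (y ^ 2) ^ p / y ^ 2 := by
    rw [Real.rpow_sub_one hM₀.ne', div_le_div_iff₀ hM₀ (by positivity)]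
    calc (M : ℝ) ^ p * y ^ 2 ≤ (y ^ 2) ^ p * (2 * M) := by gcongr
      _ = _ := by ring
  rw [norm_mul, Complex.norm_real, Real.norm_of_nonneg (by positivity)]
  calc _ ≤ A * ((M : ℝ) ^ (p - 1) / (1 - p)) * y ^ 3 := by
        gcongr
        exact norm_tsum_cfTerm_nat_add_le hp₁ hf hM
    _ ≤ A * (2 * (y ^ 2) ^ p / y ^ 2 / (1 - p)) * y ^ 3 := by
        gcongr
    _ = 2 * A / (1 - p) * (y * (y ^ 2) ^ p) := by
        field_simp
    _ = 2 * A / (1 - p) * y ^ (1 + 2 * p) := by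
        rw [Real.rpow_add hy₀, Real.rpow_one, ← Real.rpow_natCast_mul hy₀.le]
        norm_num

theorem norm_sum_floor_cube_div_sub_le {C η : ℝ} (hη₀ : 0 ≤ η) (hη₂ : η < 2)
    (hf : ∀ x : ℝ, 1 ≤ x → ∑ n ∈ Icc 1 ⌊x⌋₊, ‖f n‖ ^ 2 ≤ C * x ^ η) (hy : 1 ≤ y) :
    ‖∑ n ∈ Icc 1 ⌊y ^ 3⌋₊, f ⌊y ^ 3 / n⌋₊ - (∑' n, cfTerm f n) * ((y ^ 3 : ℝ) : ℂ)‖ ≤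
      (1 + 3 / (1 - η / 2)) * √C * y ^ (1 + η) := by
  have hpt := fun m (hm : 1 ≤ m) => norm_le_sqrt_mul_rpow_of_sum_sq_le hf hm
  have hp₀ : 0 ≤ η / 2 := by positivity
  have hp₁ : η / 2 < 1 := by linarith
  have hexp : 1 + 2 * (η / 2) = 1 + η := by ring
  have h₁ := norm_sum_Icc_floor_cube_div_le hp₀ hp₁ hpt hy
  have h₃ := norm_tsum_cfTerm_floor_sq_mul_le hp₀ hp₁ hpt hy
  rw [hexp] at h₁ h₃
  rw [sum_floor_div_sub_eq (summable_cfTerm hp₁ hpt) _ ⌊y ^ 2⌋₊]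
  calc _ ≤ _ := norm_sub_le_of_le (norm_add_le_of_le h₁ (norm_sum_Icc_floor_sq_mul_le hη₀ hf hy _
        fun m hm => norm_natFloor_div_sub_le_one (by positivity) hm)) h₃
    _ = _ := by ring

end

theorem sum_floor_asymptotic_general (f : ℕ → ℂ) (η : ℝ) (hη₀ : 0 < η) (hη₂ : η < 2)
    (C : ℝ)
    (hf : ∀ x : ℝ, 1 ≤ x → ∑ n ∈ Finset.Icc 1 ⌊x⌋₊, ‖f n‖ ^ 2 ≤ C * x ^ η) :
    Summable (fun n : ℕ => f (n + 1) / (((n : ℂ) + 1) * ((n : ℂ) + 2))) ∧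
    (fun x : ℝ => (∑ n ∈ Finset.Icc 1 ⌊x⌋₊, f ⌊x / (n : ℝ)⌋₊) -
        (∑' n : ℕ, f (n + 1) / (((n : ℂ) + 1) * ((n : ℂ) + 2))) * (x : ℂ))
      =O[atTop] fun x : ℝ => x ^ ((1 + η) / 3) := by
  refine ⟨summable_cfTerm (by linarith : η / 2 < 1)
    fun m hm => norm_le_sqrt_mul_rpow_of_sum_sq_le hf hm, ?_⟩
  refine isBigO_iff.mpr ⟨(1 + 3 / (1 - η / 2)) * √C, ?_⟩
  filter_upwards [eventually_ge_atTop 1] with x hx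
  set y := x ^ (1 / 3 : ℝ)
  have hy : 1 ≤ y := Real.one_le_rpow hx (by norm_num)
  have hcube : y ^ 3 = x := by
    rw [← Real.rpow_natCast, ← Real.rpow_mul (by linarith)]
    norm_num
  have hpow : x ^ ((1 + η) / 3) = y ^ (1 + η) := by
    rw [← Real.rpow_mul (by linarith)]
    ring_nf
  rw [Real.norm_of_nonneg (by positivity), hpow, ← hcube]
  exact norm_sum_floor_cube_div_sub_le hη₀.le hη₂ hf hy

/-- If `f` is a complex-valued arithmetic function, `η ∈ (0,2)` and
`∑_{n ≤ x} |f(n)|² ≤ C x^η` for all `x ≥ 1`, then the series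
`C_f = ∑ f(n)/(n(n+1))` converges and
`S_f(x) = ∑_{n ≤ x} f(⌊x/n⌋) = C_f x + O(x^{(1+η)/3})` as `x → ∞`. -/
theorem sum_floor_asymptotic (f : ℕ → ℂ) (η : ℝ) (hη₀ : 0 < η) (hη₂ : η < 2)
    (C : ℝ) (hC : 0 < C)
    (hf : ∀ x : ℝ, 1 ≤ x → ∑ n ∈ Finset.Icc 1 ⌊x⌋₊, ‖f n‖ ^ 2 ≤ C * x ^ η) :
    Summable (fun n : ℕ => f (n + 1) / (((n : ℂ) + 1) * ((n : ℂ) + 2))) ∧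
    (fun x : ℝ => (∑ n ∈ Finset.Icc 1 ⌊x⌋₊, f ⌊x / (n : ℝ)⌋₊) -
        (∑' n : ℕ, f (n + 1) / (((n : ℂ) + 1) * ((n : ℂ) + 2))) * (x : ℂ))
      =O[atTop] fun x : ℝ => x ^ ((1 + η) / 3) :=
  sum_floor_asymptotic_general f η hη₀ hη₂ C hf
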